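/- arXiv:2202.06572 — 2 statements merged into one kernel-verified Lean document; each statement's English description precedes it below -/
import Mathlib

section
/- Solution of the first homological equation. Let n ≥ 1, N ≥ 1, and let ω ∈ ℝⁿ satisfy the non-resonance condition k·ω ≠ 0 for all k ∈ ℤⁿ with 0 < |k| ≤ N. Let f(q) = Σ_{k∈ℤⁿ, |k|≤N} c_k exp(i k·q) be a trigonometric polynomial with c_{−k} = conj(c_k). Then the function χ(q) = Σ_{0<|k|≤N} c_k exp(i k·q) / (i k·ω) is real-valued and solves the homological equation {ω·p, χ} + f = c₀, i.e., Σ_{j=1}^n ωⱼ ∂χ/∂qⱼ (q) = f(q) − c₀ for all q ∈ ℝⁿ, where c₀ = ⟨f⟩_q is the angular average of f. -/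
/-!
On a trigonometric polynomial `∑ a_k e^{i k·q}` the derivative along `ω` acts diagonally,
multiplying the `k`-th coefficient by `i k·ω`. Dividing every nonzero mode of `f` by `i k·ω`
(legitimate for all modes present, by non-resonance) therefore inverts it on everything but
the mean `c₀`. Since `k ↦ i k·ω` is odd and purely imaginary, the division preserves the
reality condition `a_{-k} = conj a_k`, which says exactly that the polynomial is real.
-/

open Complex ComplexConjugate

noncomputable section

variable {n : ℕ}

lemma finite_setOf_sum_abs_le (N : ℤ) : {k : Fin n → ℤ | ∑ i, |k i| ≤ N}.Finite := by
  refine (Set.Finite.pi fun _ => Set.finite_Icc (-N) N).subset fun k hk i _ => ?_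
  exact abs_le.1 ((Finset.single_le_sum (fun i _ => abs_nonneg (k i)) (Finset.mem_univ i)).trans hk)

lemma sum_ofReal_mul_apply_single (L : (Fin n → ℝ) →L[ℝ] ℂ) (ω : Fin n → ℝ) :
    ∑ j, (ω j : ℂ) * L (Pi.single j 1) = L ω := by
  conv_rhs => rw [← Finset.univ_sum_single ω]
  rw [map_sum]
  refine Finset.sum_congr rfl fun j _ => ?_
  rw [← real_smul, ← L.map_smul, ← Pi.single_smul', smul_eq_mul, mul_one]

namespace TrigPoly

def fourierMode (k : Fin n → ℤ) (q : Fin n → ℝ) : ℂ :=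
  exp (I * ∑ i, (k i : ℂ) * q i)

def pairingCLM (k : Fin n → ℤ) : (Fin n → ℝ) →L[ℝ] ℂ :=
  ∑ i, (k i : ℂ) • ofRealCLM.comp (ContinuousLinearMap.proj i)

lemma pairingCLM_apply (k : Fin n → ℤ) (v : Fin n → ℝ) :
    pairingCLM k v = ∑ i, (k i : ℂ) * v i := by
  simp [pairingCLM]

lemma fourierMode_zero (q : Fin n → ℝ) : fourierMode 0 q = 1 := by
  simp [fourierMode]

lemma conj_fourierMode (k : Fin n → ℤ) (q : Fin n → ℝ) :
    conj (fourierMode k q) = fourierMode (-k) q := by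
  simp [fourierMode, ← exp_conj, Finset.sum_neg_distrib]

lemma hasFDerivAt_fourierMode (k : Fin n → ℤ) (q : Fin n → ℝ) :
    HasFDerivAt (fourierMode k) ((fourierMode k q * I) • pairingCLM k) q := by
  have h := ((pairingCLM k).hasFDerivAt (x := q)).const_mul I |>.cexp
  rw [smul_smul] at h
  simp only [pairingCLM_apply] at h
  exact h

def trigPoly (a : (Fin n → ℤ) → ℂ) (q : Fin n → ℝ) : ℂ :=
  ∑ᶠ k, a k * fourierMode k q

lemma trigPoly_eq_sum {a : (Fin n → ℤ) → ℂ} {S : Finset (Fin n → ℤ)}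
    (hS : Function.support a ⊆ S) (q : Fin n → ℝ) :
    trigPoly a q = ∑ k ∈ S, a k * fourierMode k q :=
  finsum_eq_sum_of_support_subset _ fun _ hk => hS (left_ne_zero_of_mul hk)

lemma trigPoly_sub {a b : (Fin n → ℤ) → ℂ} (ha : a.HasFiniteSupport)
    (hb : b.HasFiniteSupport) (q : Fin n → ℝ) :
    trigPoly (a - b) q = trigPoly a q - trigPoly b q := by
  simp only [trigPoly, Pi.sub_apply, sub_mul]
  exact finsum_sub_distrib (ha.subset fun k hk => left_ne_zero_of_mul hk)
    (hb.subset fun k hk => left_ne_zero_of_mul hk)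

lemma trigPoly_single_zero (z : ℂ) (q : Fin n → ℝ) : trigPoly (Pi.single 0 z) q = z := by
  rw [trigPoly, finsum_eq_single _ 0 fun _ hk => by simp [hk], Pi.single_eq_same,
    fourierMode_zero, mul_one]

lemma conj_trigPoly (a : (Fin n → ℤ) → ℂ) (q : Fin n → ℝ) :
    conj (trigPoly a q) = trigPoly (fun k => conj (a (-k))) q := by
  rw [trigPoly, starRingEnd_apply, ← starAddEquiv_apply, AddEquiv.map_finsum, trigPoly,
    ← finsum_comp_equiv (Equiv.neg _)]
  simp [conj_fourierMode]

lemma im_trigPoly_eq_zero {a : (Fin n → ℤ) → ℂ} (ha : ∀ k, a (-k) = conj (a k))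
    (q : Fin n → ℝ) : (trigPoly a q).im = 0 := by
  rw [← conj_eq_iff_im, conj_trigPoly]
  simp [ha]

lemma fderiv_trigPoly_apply {a : (Fin n → ℤ) → ℂ} (ha : a.HasFiniteSupport)
    (q v : Fin n → ℝ) :
    fderiv ℝ (trigPoly a) q v =
      trigPoly (fun k => I * ((∑ i, (k i : ℝ) * v i : ℝ) : ℂ) * a k) q := by
  have hsum : trigPoly a = fun q => ∑ k ∈ ha.toFinset, a k * fourierMode k q :=
    funext (trigPoly_eq_sum ha.coe_toFinset.ge)
  have hderiv := HasFDerivAt.fun_sum (u := ha.toFinset) fun k _ =>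
    (hasFDerivAt_fourierMode k q).const_mul (a k)
  rw [hsum, hderiv.fderiv, trigPoly_eq_sum (S := ha.toFinset)]
  · rw [sum_apply]
    refine Finset.sum_congr rfl fun k _ => ?_
    simp only [smul_apply, pairingCLM_apply, smul_eq_mul]
    push_cast
    ring
  · exact fun k hk => ha.mem_toFinset.2 (right_ne_zero_of_mul hk)

def homologicalCoeff (ω : Fin n → ℝ) (c : (Fin n → ℤ) → ℂ) (k : Fin n → ℤ) : ℂ :=
  if k = 0 then 0 else c k / (I * ((∑ i, (k i : ℝ) * ω i : ℝ) : ℂ))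

lemma support_homologicalCoeff_subset (ω : Fin n → ℝ) (c : (Fin n → ℤ) → ℂ) :
    Function.support (homologicalCoeff ω c) ⊆ Function.support c := by
  intro k hk hck
  simp [homologicalCoeff, hck] at hk

lemma homologicalCoeff_neg {ω : Fin n → ℝ} {c : (Fin n → ℤ) → ℂ}
    (hc : ∀ k, c (-k) = conj (c k)) (k : Fin n → ℤ) :
    homologicalCoeff ω c (-k) = conj (homologicalCoeff ω c k) := by
  by_cases hk : k = 0
  · simp [homologicalCoeff, hk]
  · simp [homologicalCoeff, hk, hc, Finset.sum_neg_distrib, div_neg]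

lemma mul_homologicalCoeff {ω : Fin n → ℝ} {c : (Fin n → ℤ) → ℂ}
    (hω : ∀ k ≠ 0, c k ≠ 0 → ∑ i, (k i : ℝ) * ω i ≠ 0) (k : Fin n → ℤ) :
    I * ((∑ i, (k i : ℝ) * ω i : ℝ) : ℂ) * homologicalCoeff ω c k =
      (c - Pi.single 0 (c 0) : (Fin n → ℤ) → ℂ) k := by
  by_cases hk : k = 0
  · simp [homologicalCoeff, hk]
  by_cases hck : c k = 0
  · simp [homologicalCoeff, hk, hck]
  have hkω : ((∑ i, (k i : ℝ) * ω i : ℝ) : ℂ) ≠ 0 := ofReal_ne_zero.2 (hω k hk hck)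
  simp only [homologicalCoeff, if_neg hk, Pi.sub_apply, Pi.single_eq_of_ne hk, sub_zero]
  field_simp

end TrigPoly

end

open TrigPoly

theorem first_homological_equation_general (n N : ℕ)
    (ω : Fin n → ℝ)
    (hres : ∀ k : Fin n → ℤ, k ≠ 0 → (∑ i, |k i|) ≤ (N : ℤ) →
      (∑ i, (k i : ℝ) * ω i) ≠ 0)
    (c : (Fin n → ℤ) → ℂ)
    (hsupp : ∀ k, c k ≠ 0 → (∑ i, |k i|) ≤ (N : ℤ))
    (hreal : ∀ k, c (-k) = starRingEnd ℂ (c k))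
    (f χ : (Fin n → ℝ) → ℂ)
    (hf : ∀ q : Fin n → ℝ,
      f q = ∑ᶠ k : Fin n → ℤ,
        c k * Complex.exp (Complex.I * ∑ i, (k i : ℂ) * (q i)))
    (hχ : ∀ q : Fin n → ℝ,
      χ q = ∑ᶠ k : Fin n → ℤ,
        if k ≠ 0 then
          c k * Complex.exp (Complex.I * ∑ i, (k i : ℂ) * (q i)) /
            (Complex.I * ((∑ i, (k i : ℝ) * ω i : ℝ) : ℂ))
        else 0) :
    (∀ q : Fin n → ℝ, (χ q).im = 0) ∧
    (∀ q : Fin n → ℝ,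
      (∑ j, ((ω j : ℂ) * fderiv ℝ χ q (Pi.single j 1))) = f q - c 0) := by
  have hc : c.HasFiniteSupport := (finite_setOf_sum_abs_le N).subset hsupp
  obtain rfl : f = trigPoly c := funext hf
  obtain rfl : χ = trigPoly (homologicalCoeff ω c) := by
    refine funext fun q => (hχ q).trans (finsum_congr fun k => ?_)
    by_cases hk : k = 0 <;> simp [homologicalCoeff, fourierMode, hk, mul_div_right_comm]
  refine ⟨im_trigPoly_eq_zero (homologicalCoeff_neg hreal), fun q => ?_⟩
  have hcoeff := funext (mul_homologicalCoeff (ω := ω) fun k hk hck => hres k hk (hsupp k hck))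
  rw [sum_ofReal_mul_apply_single,
    fderiv_trigPoly_apply (hc.subset (support_homologicalCoeff_subset ω c)), hcoeff,
    trigPoly_sub hc ((Set.finite_singleton 0).subset Pi.support_single_subset),
    trigPoly_single_zero]

/-- Solution of the first homological equation.  Under the
non-resonance condition `k·ω ≠ 0` for `0 < |k| ≤ N`, given a trigonometric
polynomial `f(q) = Σ_{|k|≤N} c_k e^{i k·q}` with `c_{−k} = conj c_k`, the
function `χ(q) = Σ_{0<|k|≤N} c_k e^{i k·q}/(i k·ω)` is real-valued and solves
`Σⱼ ωⱼ ∂χ/∂qⱼ = f − c₀`, i.e. the homological equation `{ω·p, χ} + f = c₀`,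
where `c₀ = ⟨f⟩_q`. -/
theorem first_homological_equation (n N : ℕ) (hn : 1 ≤ n) (hN : 1 ≤ N)
    (ω : Fin n → ℝ)
    (hres : ∀ k : Fin n → ℤ, k ≠ 0 → (∑ i, |k i|) ≤ (N : ℤ) →
      (∑ i, (k i : ℝ) * ω i) ≠ 0)
    (c : (Fin n → ℤ) → ℂ)
    (hsupp : ∀ k, c k ≠ 0 → (∑ i, |k i|) ≤ (N : ℤ))
    (hreal : ∀ k, c (-k) = starRingEnd ℂ (c k))
    (f χ : (Fin n → ℝ) → ℂ)
    (hf : ∀ q : Fin n → ℝ,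
      f q = ∑ᶠ k : Fin n → ℤ,
        c k * Complex.exp (Complex.I * ∑ i, (k i : ℂ) * (q i)))
    (hχ : ∀ q : Fin n → ℝ,
      χ q = ∑ᶠ k : Fin n → ℤ,
        if k ≠ 0 then
          c k * Complex.exp (Complex.I * ∑ i, (k i : ℂ) * (q i)) /
            (Complex.I * ((∑ i, (k i : ℝ) * ω i : ℝ) : ℂ))
        else 0) :
    (∀ q : Fin n → ℝ, (χ q).im = 0) ∧
    (∀ q : Fin n → ℝ,
      (∑ j, ((ω j : ℂ) * fderiv ℝ χ q (Pi.single j 1))) = f q - c 0) :=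
  first_homological_equation_general n N ω hres c hsupp hreal f χ hf hχ
end

section
/- Solution of the homological equation under the second Melnikov condition. Let n₁, n₂ ≥ 1, N ≥ 1, let ω ∈ ℝ^{n₁} and Ω ∈ ℝ^{n₂} satisfy k·ω + σΩᵢ + σ'Ωⱼ ≠ 0 for all k ∈ ℤ^{n₁} with 0 < |k| ≤ N, all σ, σ' ∈ {+1,−1} and all 1 ≤ i, j ≤ n₂. Let f(q,J,φ) = Σ_{|k|≤N} Σ_{i,j=1}^{n₂} Σ_{σ,σ'∈{±1}} c^{(σ,σ')}_{k,i,j} √(Jᵢ Jⱼ) exp(i(k·q + σφᵢ + σ'φⱼ)) with the reality condition c^{(σ,σ')}_{k,i,j} = conj(c^{(−σ,−σ')}_{−k,i,j}). Then the function Y(q,J,φ) = Σ_{0<|k|≤N} Σ_{i,j=1}^{n₂} Σ_{σ,σ'∈{±1}} c^{(σ,σ')}_{k,i,j} √(Jᵢ Jⱼ) exp(i(k·q + σφᵢ + σ'φⱼ)) / (i(k·ω + σΩᵢ + σ'Ωⱼ)) is real-valued and, on the domain where all Jⱼ > 0, solves the homological equation {ω·p + Ω·J, Y} + f − ⟨f⟩_q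 = 0, where ⟨f⟩_q is the average of f over the angles q (the k = 0 part of the Fourier expansion). -/
/-!
Every mode `√(JᵢJⱼ) e^{i(k·q+σφᵢ+σ'φⱼ)}` is an eigenfunction of the linear flow `q̇ = ω, φ̇ = Ω`
with eigenvalue `i(k·ω+σΩᵢ+σ'Ωⱼ)`, and `{ω·p+Ω·J, ·}` is minus the derivative along that flow.
Dividing each coefficient of `f − ⟨f⟩_q` by its eigenvalue therefore inverts the bracket; the
Melnikov condition guarantees that no coefficient with `k ≠ 0` meets a zero eigenvalue.
Complex conjugation sends mode `(k,σ,σ')` to `(−k,−σ,−σ')` and negates its eigenvalue, so the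
reality condition on `c` passes to the coefficients of `Y`, which makes `Y` real.
-/

/-- Phase space with `n₁` action-angle pairs `(p,q)` and `n₂` action-angle
pairs `(J,φ)`. -/
abbrev PhaseSp (n₁ n₂ : ℕ) :=
  (Fin n₁ → ℝ) × (Fin n₁ → ℝ) × (Fin n₂ → ℝ) × (Fin n₂ → ℝ)

/-- The Poisson bracket `{f,g}` for complex-valued functions on `(p,q,J,φ)`. -/
noncomputable def poissonBracketEll (n₁ n₂ : ℕ) (f g : PhaseSp n₁ n₂ → ℂ)
    (x : PhaseSp n₁ n₂) : ℂ :=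
  (∑ j : Fin n₁,
    (fderiv ℝ f x (0, Pi.single j 1, 0, 0) * fderiv ℝ g x (Pi.single j 1, 0, 0, 0)
     - fderiv ℝ f x (Pi.single j 1, 0, 0, 0) * fderiv ℝ g x (0, Pi.single j 1, 0, 0)))
  + ∑ j : Fin n₂,
    (fderiv ℝ f x (0, 0, 0, Pi.single j 1) * fderiv ℝ g x (0, 0, Pi.single j 1, 0)
     - fderiv ℝ f x (0, 0, Pi.single j 1, 0) * fderiv ℝ g x (0, 0, 0, Pi.single j 1))

/-- The sign `+1` or `−1` encoded by a boolean. -/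
def sg (b : Bool) : ℝ := if b then 1 else -1

open Complex ComplexConjugate

namespace SecondMelnikov

variable {n₁ n₂ : ℕ}

lemma poissonBracketEll_linear_hamiltonian (ω : Fin n₁ → ℝ) (Ω : Fin n₂ → ℝ)
    (g : PhaseSp n₁ n₂ → ℂ) (x : PhaseSp n₁ n₂) :
    poissonBracketEll n₁ n₂
        (fun y => (∑ i, (ω i : ℂ) * (y.1 i : ℂ)) + ∑ i, (Ω i : ℂ) * (y.2.2.1 i : ℂ)) g x =
      -fderiv ℝ g x (0, ω, 0, Ω) := by
  let H : PhaseSp n₁ n₂ →ₗ[ℝ] ℂ :=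
    { toFun := fun y => (∑ i, (ω i : ℂ) * (y.1 i : ℂ)) + ∑ i, (Ω i : ℂ) * (y.2.2.1 i : ℂ)
      map_add' := fun y z => by simp [mul_add, Finset.sum_add_distrib]; ring
      map_smul' := fun t y => by simp [Finset.mul_sum, mul_left_comm] }
  have hv : ((0 : Fin n₁ → ℝ), ω, (0 : Fin n₂ → ℝ), Ω) =
      ∑ b, ω b • ((0 : Fin n₁ → ℝ), Pi.single b (1 : ℝ), (0 : Fin n₂ → ℝ), (0 : Fin n₂ → ℝ)) +
        ∑ b, Ω b • ((0 : Fin n₁ → ℝ), (0 : Fin n₁ → ℝ), (0 : Fin n₂ → ℝ), Pi.single b (1 : ℝ)) := by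
    ext <;> simp [Prod.fst_sum, Prod.snd_sum, Finset.sum_apply, Pi.single_apply]
  have hH : fderiv ℝ (fun y : PhaseSp n₁ n₂ =>
      (∑ i, (ω i : ℂ) * (y.1 i : ℂ)) + ∑ i, (Ω i : ℂ) * (y.2.2.1 i : ℂ)) x =
      LinearMap.toContinuousLinearMap H :=
    (LinearMap.toContinuousLinearMap H).hasFDerivAt.fderiv
  rw [poissonBracketEll, hH, hv]
  simp only [map_add, map_sum, map_smul]
  simp [H, Pi.single_apply, apply_ite, add_comm]

noncomputable def mode (k : Fin n₁ → ℤ) (i j : Fin n₂) (σ σ' : Bool) (x : PhaseSp n₁ n₂) : ℂ :=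
  ((Real.sqrt (x.2.2.1 i * x.2.2.1 j) : ℝ) : ℂ) *
    exp (I * ((∑ a, (k a : ℂ) * (x.2.1 a))
      + ((sg σ : ℝ) : ℂ) * (x.2.2.2 i : ℂ) + ((sg σ' : ℝ) : ℂ) * (x.2.2.2 j : ℂ)))

def freq (ω : Fin n₁ → ℝ) (Ω : Fin n₂ → ℝ) (k : Fin n₁ → ℤ) (i j : Fin n₂) (σ σ' : Bool) : ℝ :=
  (∑ a, (k a : ℝ) * ω a) + sg σ * Ω i + sg σ' * Ω j

@[simp] lemma sg_not (σ : Bool) : sg (!σ) = -sg σ := by cases σ <;> simp [sg]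

lemma freq_neg (ω : Fin n₁ → ℝ) (Ω : Fin n₂ → ℝ) (k : Fin n₁ → ℤ) (i j : Fin n₂) (σ σ' : Bool) :
    freq ω Ω (-k) i j (!σ) (!σ') = -freq ω Ω k i j σ σ' := by
  simp only [freq, sg_not, Pi.neg_apply, Int.cast_neg, neg_mul, Finset.sum_neg_distrib]
  ring

lemma conj_mode (k : Fin n₁ → ℤ) (i j : Fin n₂) (σ σ' : Bool) (x : PhaseSp n₁ n₂) :
    conj (mode k i j σ σ' x) = mode (-k) i j (!σ) (!σ') x := by
  simp only [mode, map_mul, conj_ofReal, ← exp_conj, map_add, map_sum, conj_I, map_intCast,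
    sg_not, Pi.neg_apply, Int.cast_neg, ofReal_neg, neg_mul, Finset.sum_neg_distrib]
  ring_nf

lemma mode_add_smul (ω : Fin n₁ → ℝ) (Ω : Fin n₂ → ℝ) (k : Fin n₁ → ℤ) (i j : Fin n₂)
    (σ σ' : Bool) (x : PhaseSp n₁ n₂) (t : ℝ) :
    mode k i j σ σ' (x + t • (0, ω, 0, Ω)) =
      mode k i j σ σ' x * exp (I * (t * freq ω Ω k i j σ σ')) := by
  simp only [mode, freq, Prod.fst_add, Prod.snd_add, Prod.smul_fst, Prod.smul_snd, Pi.add_apply,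
    Pi.smul_apply, smul_eq_mul, smul_zero, Pi.zero_apply, add_zero, mul_assoc, ← exp_add]
  have hsum : ∑ a, (k a : ℂ) * ((x.2.1 a + t * ω a : ℝ) : ℂ) =
      ∑ a, (k a : ℂ) * x.2.1 a + t * ∑ a, (k a : ℂ) * ω a := by
    rw [Finset.mul_sum, ← Finset.sum_add_distrib]
    exact Finset.sum_congr rfl fun _ _ => by push_cast; ring
  rw [hsum]
  push_cast
  ring_nf

lemma differentiableAt_mode (k : Fin n₁ → ℤ) {i j : Fin n₂} (σ σ' : Bool) {x : PhaseSp n₁ n₂}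
    (h : x.2.2.1 i * x.2.2.1 j ≠ 0) : DifferentiableAt ℝ (mode k i j σ σ') x := by
  unfold mode
  fun_prop (disch := assumption)

lemma fderiv_mode_apply (ω : Fin n₁ → ℝ) (Ω : Fin n₂ → ℝ) (k : Fin n₁ → ℤ) {i j : Fin n₂}
    (σ σ' : Bool) {x : PhaseSp n₁ n₂} (h : x.2.2.1 i * x.2.2.1 j ≠ 0) :
    fderiv ℝ (mode k i j σ σ') x (0, ω, 0, Ω) = I * freq ω Ω k i j σ σ' * mode k i j σ σ' x := by
  rw [← (differentiableAt_mode k σ σ' h).lineDeriv_eq_fderiv, lineDeriv]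
  simp only [mode_add_smul]
  have hphase : HasDerivAt (fun t : ℝ => I * (t * freq ω Ω k i j σ σ'))
      (I * freq ω Ω k i j σ σ') 0 := by
    simpa using
      ((hasDerivAt_id (0 : ℝ)).ofReal_comp.mul_const (freq ω Ω k i j σ σ' : ℂ)).const_mul I
  rw [(hphase.cexp.const_mul (mode k i j σ σ' x)).deriv, ofReal_zero, zero_mul, mul_zero, exp_zero,
    one_mul, mul_comm]

abbrev Coeffs (n₁ n₂ : ℕ) := (Fin n₁ → ℤ) → Fin n₂ → Fin n₂ → Bool → Bool → ℂ

noncomputable def fourierTerm (a : Coeffs n₁ n₂) (k : Fin n₁ → ℤ) (x : PhaseSp n₁ n₂) : ℂ :=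
  ∑ i, ∑ j, ∑ σ : Bool, ∑ σ' : Bool, a k i j σ σ' * mode k i j σ σ' x

noncomputable def fourierSum (a : Coeffs n₁ n₂) (x : PhaseSp n₁ n₂) : ℂ :=
  ∑ᶠ k, fourierTerm a k x

lemma support_fourierTerm_subset (a : Coeffs n₁ n₂) (x : PhaseSp n₁ n₂) :
    (fun k => fourierTerm a k x).support ⊆ a.support := by
  intro k hk
  contrapose! hk
  simp [fourierTerm, Function.notMem_support.mp hk]

lemma fourierSum_eq_sum {a : Coeffs n₁ n₂} {S : Finset (Fin n₁ → ℤ)} (hS : a.support ⊆ S)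
    (x : PhaseSp n₁ n₂) : fourierSum a x = ∑ k ∈ S, fourierTerm a k x :=
  finsum_eq_sum_of_support_subset _ ((support_fourierTerm_subset a x).trans hS)

lemma hasFiniteSupport_of_sum_abs_le {a : Coeffs n₁ n₂} {N : ℕ}
    (ha : ∀ k i j σ σ', a k i j σ σ' ≠ 0 → ∑ b, |k b| ≤ (N : ℤ)) : a.HasFiniteSupport := by
  refine (Set.finite_Icc (fun _ => -(N : ℤ)) (fun _ => (N : ℤ))).subset fun k hk => ?_
  obtain ⟨i, j, σ, σ', hak⟩ : ∃ i j σ σ', a k i j σ σ' ≠ 0 := by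
    by_contra! h
    exact hk (by ext i j σ σ'; exact h i j σ σ')
  have hk_le : ∀ b, |k b| ≤ N := fun b =>
    (Finset.single_le_sum (fun _ _ => abs_nonneg _) (Finset.mem_univ b)).trans (ha k i j σ σ' hak)
  exact ⟨fun b => (abs_le.mp (hk_le b)).1, fun b => (abs_le.mp (hk_le b)).2⟩

lemma fourierSum_update_zero {a : Coeffs n₁ n₂} (ha : a.HasFiniteSupport) (x : PhaseSp n₁ n₂) :
    fourierSum (Function.update a 0 0) x = fourierSum a x - fourierTerm a 0 x := by
  set S := insert 0 ha.toFinset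
  have hS : a.support ⊆ S := ha.coe_toFinset.ge.trans (by simp [S])
  have hS' : (Function.update a 0 0).support ⊆ S :=
    (Function.support_update_zero a 0).trans_subset (Set.sdiff_subset.trans hS)
  have h0 : (0 : Fin n₁ → ℤ) ∈ S := Finset.mem_insert_self _ _
  rw [fourierSum_eq_sum hS, fourierSum_eq_sum hS', ← Finset.add_sum_erase S _ h0,
    ← Finset.add_sum_erase S _ h0]
  have hrest : ∀ k ∈ S.erase 0, fourierTerm (Function.update a 0 0) k x = fourierTerm a k x :=
    fun k hk => by simp [fourierTerm, Function.update_of_ne (Finset.ne_of_mem_erase hk)]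
  rw [Finset.sum_congr rfl hrest]
  simp [fourierTerm]

lemma fderiv_fourierSum_apply (ω : Fin n₁ → ℝ) (Ω : Fin n₂ → ℝ) {a : Coeffs n₁ n₂}
    (ha : a.HasFiniteSupport) {x : PhaseSp n₁ n₂} (hx : ∀ i, x.2.2.1 i ≠ 0) :
    fderiv ℝ (fourierSum a) x (0, ω, 0, Ω) =
      fourierSum (fun k i j σ σ' => I * freq ω Ω k i j σ σ' * a k i j σ σ') x := by
  set S := ha.toFinset
  have hS : a.support ⊆ S := ha.coe_toFinset.ge
  have hmode : ∀ k i j σ σ', DifferentiableAt ℝ (mode k i j σ σ') x :=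
    fun k i j σ σ' => differentiableAt_mode k σ σ' (mul_ne_zero (hx i) (hx j))
  have hderiv : HasFDerivAt (fourierSum a) (∑ k ∈ S, ∑ i, ∑ j, ∑ σ : Bool, ∑ σ' : Bool,
      a k i j σ σ' • fderiv ℝ (mode k i j σ σ') x) x := by
    rw [show fourierSum a = _ from funext (fourierSum_eq_sum hS)]
    exact HasFDerivAt.fun_sum fun k _ => HasFDerivAt.fun_sum fun i _ =>
      HasFDerivAt.fun_sum fun j _ => HasFDerivAt.fun_sum fun σ _ => HasFDerivAt.fun_sum
        fun σ' _ => (hmode k i j σ σ').hasFDerivAt.const_mul _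
  rw [hderiv.fderiv, fourierSum_eq_sum (hS.trans' ?_)]
  · simp only [FunLike.coe_sum, FunLike.coe_smul, Finset.sum_apply,
      Pi.smul_apply, smul_eq_mul, fderiv_mode_apply ω Ω _ _ _ (mul_ne_zero (hx _) (hx _)),
      fourierTerm, mul_assoc, mul_left_comm]
  · exact Function.support_mul_subset_right (fun k i j σ σ' => I * (freq ω Ω k i j σ σ' : ℂ)) a

def reflect (a : Coeffs n₁ n₂) : Coeffs n₁ n₂ :=
  fun k i j σ σ' => conj (a (-k) i j (!σ) (!σ'))

lemma conj_fourierTerm (a : Coeffs n₁ n₂) (k : Fin n₁ → ℤ) (x : PhaseSp n₁ n₂) :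
    conj (fourierTerm a k x) = fourierTerm (reflect a) (-k) x := by
  simp only [fourierTerm, reflect, map_sum, map_mul, conj_mode, neg_neg]
  simp only [Fintype.sum_bool, Bool.not_true, Bool.not_false, add_comm]

lemma conj_fourierSum {a : Coeffs n₁ n₂} (ha : a.HasFiniteSupport) (x : PhaseSp n₁ n₂) :
    conj (fourierSum a x) = fourierSum (reflect a) x := by
  rw [fourierSum, map_finsum _ (Set.Finite.subset ha (support_fourierTerm_subset a x))]
  simp only [conj_fourierTerm]
  exact finsum_comp_equiv (Equiv.neg _) (f := fun k => fourierTerm (reflect a) k x)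

lemma fourierSum_im_eq_zero {a : Coeffs n₁ n₂} (ha : a.HasFiniteSupport) (hreal : reflect a = a)
    (x : PhaseSp n₁ n₂) : (fourierSum a x).im = 0 :=
  conj_eq_iff_im.mp (by rw [conj_fourierSum ha, hreal])

-- At a resonance `freq = 0` this is the junk value `a / 0 = 0`, which is harmless exactly when
-- `a` vanishes there.
noncomputable def homologicalCoeffs (ω : Fin n₁ → ℝ) (Ω : Fin n₂ → ℝ) (a : Coeffs n₁ n₂) :
    Coeffs n₁ n₂ :=
  Function.update (fun k i j σ σ' => a k i j σ σ' / (I * freq ω Ω k i j σ σ')) 0 0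

lemma hasFiniteSupport_homologicalCoeffs (ω : Fin n₁ → ℝ) (Ω : Fin n₂ → ℝ) {a : Coeffs n₁ n₂}
    (ha : a.HasFiniteSupport) : (homologicalCoeffs ω Ω a).HasFiniteSupport := by
  refine Set.Finite.subset ha ((Function.support_update_zero _ 0).trans_subset
    (Set.sdiff_subset.trans fun k hk hak => hk ?_))
  ext i j σ σ'
  simp [hak]

lemma reflect_homologicalCoeffs (ω : Fin n₁ → ℝ) (Ω : Fin n₂ → ℝ) {a : Coeffs n₁ n₂}
    (hreal : reflect a = a) : reflect (homologicalCoeffs ω Ω a) = homologicalCoeffs ω Ω a := by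
  simp only [funext_iff, reflect] at hreal
  ext k i j σ σ'
  by_cases hk : k = 0
  · simp [reflect, homologicalCoeffs, hk]
  · simp [reflect, homologicalCoeffs, hk, freq_neg, hreal]

lemma freq_mul_homologicalCoeffs (ω : Fin n₁ → ℝ) (Ω : Fin n₂ → ℝ) {a : Coeffs n₁ n₂}
    (hres : ∀ k, k ≠ 0 → ∀ i j σ σ', freq ω Ω k i j σ σ' = 0 → a k i j σ σ' = 0) :
    (fun k i j σ σ' => I * freq ω Ω k i j σ σ' * homologicalCoeffs ω Ω a k i j σ σ') =
      Function.update a 0 0 := by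
  ext k i j σ σ'
  by_cases hk : k = 0
  · simp [homologicalCoeffs, hk]
  by_cases hfreq : freq ω Ω k i j σ σ' = 0
  · simp [homologicalCoeffs, hk, hfreq, hres k hk i j σ σ' hfreq]
  · have hIfreq : I * freq ω Ω k i j σ σ' ≠ 0 := by simp [hfreq]
    simp [homologicalCoeffs, hk, mul_div_cancel₀ _ hIfreq]

end SecondMelnikov

open SecondMelnikov

theorem second_melnikov_homological_equation_general (n₁ n₂ N : ℕ)
    (ω : Fin n₁ → ℝ) (Ω : Fin n₂ → ℝ)
    (hres : ∀ k : Fin n₁ → ℤ, k ≠ 0 → (∑ i, |k i|) ≤ (N : ℤ) →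
      ∀ (i j : Fin n₂) (σ σ' : Bool),
        (∑ a, (k a : ℝ) * ω a) + sg σ * Ω i + sg σ' * Ω j ≠ 0)
    (c : (Fin n₁ → ℤ) → Fin n₂ → Fin n₂ → Bool → Bool → ℂ)
    (hsupp : ∀ k i j σ σ', c k i j σ σ' ≠ 0 → (∑ a, |k a|) ≤ (N : ℤ))
    (hreal : ∀ k i j σ σ',
      c k i j σ σ' = starRingEnd ℂ (c (-k) i j (!σ) (!σ')))
    (f favg Y : PhaseSp n₁ n₂ → ℂ)
    (hf : ∀ x : PhaseSp n₁ n₂,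
      f x = ∑ᶠ k : Fin n₁ → ℤ, ∑ i, ∑ j, ∑ σ : Bool, ∑ σ' : Bool,
        c k i j σ σ' * ((Real.sqrt (x.2.2.1 i * x.2.2.1 j) : ℝ) : ℂ) *
          Complex.exp (Complex.I * ((∑ a, (k a : ℂ) * (x.2.1 a))
            + ((sg σ : ℝ) : ℂ) * (x.2.2.2 i : ℂ) + ((sg σ' : ℝ) : ℂ) * (x.2.2.2 j : ℂ))))
    (hfavg : ∀ x : PhaseSp n₁ n₂,
      favg x = ∑ i, ∑ j, ∑ σ : Bool, ∑ σ' : Bool,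
        c 0 i j σ σ' * ((Real.sqrt (x.2.2.1 i * x.2.2.1 j) : ℝ) : ℂ) *
          Complex.exp (Complex.I *
            (((sg σ : ℝ) : ℂ) * (x.2.2.2 i : ℂ) + ((sg σ' : ℝ) : ℂ) * (x.2.2.2 j : ℂ))))
    (hY : ∀ x : PhaseSp n₁ n₂,
      Y x = ∑ᶠ k : Fin n₁ → ℤ,
        if k ≠ 0 then
          ∑ i, ∑ j, ∑ σ : Bool, ∑ σ' : Bool,
            c k i j σ σ' * ((Real.sqrt (x.2.2.1 i * x.2.2.1 j) : ℝ) : ℂ) *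
              Complex.exp (Complex.I * ((∑ a, (k a : ℂ) * (x.2.1 a))
                + ((sg σ : ℝ) : ℂ) * (x.2.2.2 i : ℂ) + ((sg σ' : ℝ) : ℂ) * (x.2.2.2 j : ℂ)))
              / (Complex.I *
                  ((((∑ a, (k a : ℝ) * ω a) + sg σ * Ω i + sg σ' * Ω j : ℝ)) : ℂ))
        else 0) :
    (∀ x : PhaseSp n₁ n₂, (Y x).im = 0) ∧
    (∀ x : PhaseSp n₁ n₂, (∀ i, 0 < x.2.2.1 i) →
      poissonBracketEll n₁ n₂
        (fun y => (∑ i, (ω i : ℂ) * (y.1 i : ℂ)) + ∑ i, (Ω i : ℂ) * (y.2.2.1 i : ℂ))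
        Y x + f x - favg x = 0) := by
  have hc_fin : c.HasFiniteSupport := hasFiniteSupport_of_sum_abs_le hsupp
  have hc_real : reflect c = c := by
    ext k i j σ σ'
    simp [reflect, hreal k i j σ σ']
  have hY_eq : Y = fourierSum (homologicalCoeffs ω Ω c) := by
    ext1 x
    rw [hY x]
    refine finsum_congr fun k => ?_
    by_cases hk : k = 0
    · simp [hk, homologicalCoeffs, fourierTerm]
    · simp [hk, homologicalCoeffs, fourierTerm, mode, freq, div_mul_eq_mul_div, mul_assoc]
  have hf_eq : f = fourierSum c := by
    ext1 x
    simp only [hf x, fourierSum, fourierTerm, mode, mul_assoc]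
  have hfavg_eq : favg = fourierTerm c 0 := by
    ext1 x
    simp [hfavg x, fourierTerm, mode, mul_assoc]
  have hY_fin := hasFiniteSupport_homologicalCoeffs ω Ω hc_fin
  refine ⟨fun x => hY_eq ▸ fourierSum_im_eq_zero hY_fin (reflect_homologicalCoeffs ω Ω hc_real) x,
    fun x hx => ?_⟩
  have hnonres : ∀ k, k ≠ 0 → ∀ i j σ σ', freq ω Ω k i j σ σ' = 0 → c k i j σ σ' = 0 :=
    fun k hk i j σ σ' hfreq => by_contra fun hc => hres k hk (hsupp k i j σ σ' hc) i j σ σ' hfreq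
  rw [poissonBracketEll_linear_hamiltonian, hY_eq,
    fderiv_fourierSum_apply ω Ω hY_fin fun i => (hx i).ne', freq_mul_homologicalCoeffs ω Ω hnonres,
    fourierSum_update_zero hc_fin, hf_eq, hfavg_eq]
  ring

/-- Solution of the homological equation under the second
Melnikov condition.  If `k·ω + σΩᵢ + σ'Ωⱼ ≠ 0` for all `0 < |k| ≤ N`,
`σ, σ' ∈ {±1}` and all `i, j`, and
`f = Σ_{|k|≤N} Σ_{i,j} Σ_{σ,σ'} c^{(σ,σ')}_{k,i,j} √(JᵢJⱼ) e^{i(k·q+σφᵢ+σ'φⱼ)}`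
with `c^{(σ,σ')}_{k,i,j} = conj (c^{(−σ,−σ')}_{−k,i,j})`, then
`Y = Σ_{0<|k|≤N} c^{(σ,σ')}_{k,i,j} √(JᵢJⱼ) e^{i(k·q+σφᵢ+σ'φⱼ)} / (i(k·ω+σΩᵢ+σ'Ωⱼ))`
is real-valued and, where all `Jⱼ > 0`, solves `{ω·p + Ω·J, Y} + f − ⟨f⟩_q = 0`. -/
theorem second_melnikov_homological_equation (n₁ n₂ N : ℕ)
    (hn₁ : 1 ≤ n₁) (hn₂ : 1 ≤ n₂) (hN : 1 ≤ N)
    (ω : Fin n₁ → ℝ) (Ω : Fin n₂ → ℝ)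
    (hres : ∀ k : Fin n₁ → ℤ, k ≠ 0 → (∑ i, |k i|) ≤ (N : ℤ) →
      ∀ (i j : Fin n₂) (σ σ' : Bool),
        (∑ a, (k a : ℝ) * ω a) + sg σ * Ω i + sg σ' * Ω j ≠ 0)
    (c : (Fin n₁ → ℤ) → Fin n₂ → Fin n₂ → Bool → Bool → ℂ)
    (hsupp : ∀ k i j σ σ', c k i j σ σ' ≠ 0 → (∑ a, |k a|) ≤ (N : ℤ))
    (hreal : ∀ k i j σ σ',
      c k i j σ σ' = starRingEnd ℂ (c (-k) i j (!σ) (!σ')))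
    (f favg Y : PhaseSp n₁ n₂ → ℂ)
    (hf : ∀ x : PhaseSp n₁ n₂,
      f x = ∑ᶠ k : Fin n₁ → ℤ, ∑ i, ∑ j, ∑ σ : Bool, ∑ σ' : Bool,
        c k i j σ σ' * ((Real.sqrt (x.2.2.1 i * x.2.2.1 j) : ℝ) : ℂ) *
          Complex.exp (Complex.I * ((∑ a, (k a : ℂ) * (x.2.1 a))
            + ((sg σ : ℝ) : ℂ) * (x.2.2.2 i : ℂ) + ((sg σ' : ℝ) : ℂ) * (x.2.2.2 j : ℂ))))
    (hfavg : ∀ x : PhaseSp n₁ n₂,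
      favg x = ∑ i, ∑ j, ∑ σ : Bool, ∑ σ' : Bool,
        c 0 i j σ σ' * ((Real.sqrt (x.2.2.1 i * x.2.2.1 j) : ℝ) : ℂ) *
          Complex.exp (Complex.I *
            (((sg σ : ℝ) : ℂ) * (x.2.2.2 i : ℂ) + ((sg σ' : ℝ) : ℂ) * (x.2.2.2 j : ℂ))))
    (hY : ∀ x : PhaseSp n₁ n₂,
      Y x = ∑ᶠ k : Fin n₁ → ℤ,
        if k ≠ 0 then
          ∑ i, ∑ j, ∑ σ : Bool, ∑ σ' : Bool,
            c k i j σ σ' * ((Real.sqrt (x.2.2.1 i * x.2.2.1 j) : ℝ) : ℂ) *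
              Complex.exp (Complex.I * ((∑ a, (k a : ℂ) * (x.2.1 a))
                + ((sg σ : ℝ) : ℂ) * (x.2.2.2 i : ℂ) + ((sg σ' : ℝ) : ℂ) * (x.2.2.2 j : ℂ)))
              / (Complex.I *
                  ((((∑ a, (k a : ℝ) * ω a) + sg σ * Ω i + sg σ' * Ω j : ℝ)) : ℂ))
        else 0) :
    (∀ x : PhaseSp n₁ n₂, (Y x).im = 0) ∧
    (∀ x : PhaseSp n₁ n₂, (∀ i, 0 < x.2.2.1 i) →
      poissonBracketEll n₁ n₂
        (fun y => (∑ i, (ω i : ℂ) * (y.1 i : ℂ)) + ∑ i, (Ω i : ℂ) * (y.2.2.1 i : ℂ))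
        Y x + f x - favg x = 0) :=
  second_melnikov_homological_equation_general n₁ n₂ N ω Ω hres c hsupp hreal f favg Y hf hfavg hY
end
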